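/- Let u : ℕ → ℕ be the sequence defined by u_0 = 1, u_1 = 2, and u_n = u_{n-1} + u_{n-2} + F_{n+1} for n ≥ 2. Then for all n ≥ 0, u_n = \sum_{k=0}^{\lfloor n/2 \rfloor} \binom{n-k}{k}·(n-k+1). -/

import Mathlib

open Finset

lemma fibsum (n : ℕ) : Nat.fib (n + 1) = ∑ k ∈ range (n + 1), (n - k).choose k := by
  rw [Nat.fib_succ_eq_sum_choose, Finset.Nat.sum_antidiagonal_eq_sum_range_succ_mk]
  rw [← Finset.sum_range_reflect]
  apply Finset.sum_congr rfl
  intro k hk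
  simp only [mem_range] at hk
  congr 1
  omega

def T (n : ℕ) : ℕ := ∑ k ∈ range (n + 1), (n - k).choose k * (n - k + 1)

lemma pascal (n j : ℕ) (hj : j ≤ n + 1) :
    (n + 1 - j).choose (j + 1) = (n - j).choose j + (n - j).choose (j + 1) := by
  rcases Nat.lt_or_ge j (n + 1) with h | h
  · have : n + 1 - j = (n - j) + 1 := by omega
    rw [this, Nat.choose_succ_succ]
  · have hj' : j = n + 1 := by omega
    subst hj'
    simp [Nat.choose_eq_zero_of_lt]

lemma Trec (n : ℕ) : T (n + 2) = T (n + 1) + T n + Nat.fib (n + 3) := by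
  have hA : ∑ j ∈ range (n + 2), (n - j).choose j * (n + 2 - j)
      = T n + Nat.fib (n + 1) := by
    rw [Finset.sum_range_succ]
    have hz : (n - (n + 1)).choose (n + 1) = 0 := by
      simp [Nat.choose_eq_zero_of_lt]
    rw [hz]
    have : ∑ j ∈ range (n + 1), (n - j).choose j * (n + 2 - j)
        = ∑ j ∈ range (n + 1), ((n - j).choose j * (n - j + 1) + (n - j).choose j) := by
      apply Finset.sum_congr rfl
      intro j hj
      simp only [mem_range] at hj
      have : n + 2 - j = (n - j + 1) + 1 := by omega
      rw [this, Nat.mul_add, Nat.mul_one]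
    rw [this, Finset.sum_add_distrib, T, fibsum]
    ring
  have hB : (∑ j ∈ range (n + 2), (n - j).choose (j + 1) * (n + 2 - j)) + (n + 3)
      = T (n + 1) + Nat.fib (n + 2) := by
    have e1 : ∑ k ∈ range (n + 3), (n + 1 - k).choose k * (n + 3 - k)
        = (∑ j ∈ range (n + 2), (n - j).choose (j + 1) * (n + 2 - j)) + (n + 3) := by
      rw [Finset.sum_range_succ']
      congr 1
      · apply Finset.sum_congr rfl
        intro j hj
        simp only [mem_range] at hj
        congr 1
        · congr 1; omega
        · omega
      · simp
    have e2 : ∑ k ∈ range (n + 3), (n + 1 - k).choose k * (n + 3 - k)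
        = T (n + 1) + Nat.fib (n + 2) := by
      rw [Finset.sum_range_succ]
      have hz : (n + 1 - (n + 2)).choose (n + 2) = 0 := by
        simp [Nat.choose_eq_zero_of_lt]
      rw [hz]
      have : ∑ k ∈ range (n + 2), (n + 1 - k).choose k * (n + 3 - k)
          = ∑ k ∈ range (n + 2), ((n + 1 - k).choose k * (n + 1 - k + 1) + (n + 1 - k).choose k) := by
        apply Finset.sum_congr rfl
        intro k hk
        simp only [mem_range] at hk
        have : n + 3 - k = (n + 1 - k + 1) + 1 := by omega
        rw [this, Nat.mul_add, Nat.mul_one]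
      rw [this, Finset.sum_add_distrib, T, fibsum]
      ring
    omega
  have main : T (n + 2)
      = (∑ j ∈ range (n + 2), (n - j).choose j * (n + 2 - j))
      + (∑ j ∈ range (n + 2), (n - j).choose (j + 1) * (n + 2 - j)) + (n + 3) := by
    rw [T, Finset.sum_range_succ']
    have : ∑ j ∈ range (n + 2), (n + 2 - (j + 1)).choose (j + 1) * (n + 2 - (j + 1) + 1)
        = ∑ j ∈ range (n + 2), ((n - j).choose j * (n + 2 - j) + (n - j).choose (j + 1) * (n + 2 - j)) := by
      apply Finset.sum_congr rfl
      intro j hj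
      simp only [mem_range] at hj
      have h1 : n + 2 - (j + 1) = n + 1 - j := by omega
      have h2 : n + 1 - j + 1 = n + 2 - j := by omega
      rw [h1, h2, pascal n j (by omega), Nat.add_mul]
    rw [this, Finset.sum_add_distrib]
    simp
  rw [main, hA]
  have hf : Nat.fib (n + 3) = Nat.fib (n + 2) + Nat.fib (n + 1) := by
    rw [Nat.fib_add_two]; ring
  omega

lemma trunc (n : ℕ) :
    ∑ k ∈ range (n / 2 + 1), (n - k).choose k * (n - k + 1) = T n := by
  rw [T]
  apply Finset.sum_subset
  · intro k hk; simp only [mem_range] at *; omega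
  · intro k hk hk'
    simp only [mem_range] at hk hk'
    have : (n - k).choose k = 0 := Nat.choose_eq_zero_of_lt (by omega)
    simp [this]

theorem stmt_7 (u : ℕ → ℕ) (h0 : u 0 = 1) (h1 : u 1 = 2)
    (hrec : ∀ n : ℕ, 2 ≤ n → u n = u (n - 1) + u (n - 2) + Nat.fib (n + 1)) :
    ∀ n : ℕ, u n = ∑ k ∈ Finset.range (n / 2 + 1), (n - k).choose k * (n - k + 1) := by
  have key : ∀ n : ℕ, u n = T n := by
    intro n
    induction n using Nat.strong_induction_on with
    | _ n ih =>
      match n with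
      | 0 => simp [h0, T]
      | 1 => rw [h1]; decide
      | (m + 2) =>
        rw [hrec (m + 2) (by omega), Trec]
        simp only [Nat.add_sub_cancel]
        have h2 : m + 2 - 1 = m + 1 := by omega
        rw [h2, ih (m + 1) (by omega), ih m (by omega)]
  intro n
  rw [key, trunc]
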